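/- The uncorrected instanton-side Kramers prefactor for Neumann boundary conditions diverges like m^{−1/2} at the bifurcation: with L(m) = 2√(1+m)·K(m) and μ₀(m) = 1 − (2/(m+1))√(m² − m + 1), one has lim_{m → 0⁺} √m · (1/π)·|μ₀(m)|·√( sinh(√2·L(m)) / (√2·|(1−m)K(m) − (1+m)E(m)|) ) = (2/π)·√( sinh(√2 π)/(3√2 π) ). -/

import Mathlib

/-!
For `m < 1` the denominator factors as `(1 - m) K(m) - (1 + m) E(m) = m · G(m)`, where `G` is
a single integral over `θ` that stays continuous through `m = 0` and takes the value `-3π/4` there.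
The factor `√m` then cancels the `1/√m` coming from `√|m G(m)|`, leaving a function continuous at
`m = 0`, whose value there (using `K(0) = π/2`, `μ₀(0) = -1`) is the claimed limit.
-/

open Real Filter Set

/-- The complete elliptic integral of the first kind,
`K(m) = ∫₀^{π/2} (1 − m sin²θ)^{−1/2} dθ`. -/
noncomputable def ellipticK (m : ℝ) : ℝ :=
  ∫ θ in (0:ℝ)..(π / 2), (1 - m * Real.sin θ ^ 2) ^ (-(1 : ℝ) / 2)

/-- The complete elliptic integral of the second kind,
`E(m) = ∫₀^{π/2} √(1 − m sin²θ) dθ`. -/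
noncomputable def ellipticE (m : ℝ) : ℝ :=
  ∫ θ in (0:ℝ)..(π / 2), Real.sqrt (1 - m * Real.sin θ ^ 2)

open intervalIntegral Topology

theorem ContinuousOn.intervalIntegral_of_prod_univ {X E : Type*} [TopologicalSpace X]
    [NormedAddCommGroup E] [NormedSpace ℝ E] {f : X → ℝ → E} {s : Set X}
    (hf : ContinuousOn (Function.uncurry f) (s ×ˢ univ)) (a b : ℝ) :
    ContinuousOn (fun x => ∫ t in a..b, f x t) s := by
  rw [continuousOn_iff_continuous_domRestrict]
  exact continuous_parametric_intervalIntegral_of_continuous' (f := fun (x : s) t => f x t)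
    (hf.comp_continuous (continuous_subtype_val.prodMap continuous_id)
      fun p => ⟨p.1.2, trivial⟩) a b

theorem one_sub_mul_sin_sq_pos {m : ℝ} (hm : m < 1) (θ : ℝ) : 0 < 1 - m * sin θ ^ 2 := by
  rcases le_or_gt 0 m with h | h <;> nlinarith [sin_sq_le_one θ, sq_nonneg (sin θ)]

/-- `(1 - m) K(m) - (1 + m) E(m)`, divided by `m`, as an integral that is regular at `m = 0`. -/
noncomputable def ellipticQuotient (m : ℝ) : ℝ :=
  ∫ θ in (0:ℝ)..(π / 2), ((1 + m) * sin θ ^ 2 - 2) * (1 - m * sin θ ^ 2) ^ (-(1 : ℝ) / 2)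

theorem continuousOn_rpow_one_sub_mul_sin_sq :
    ContinuousOn (Function.uncurry fun m θ => (1 - m * sin θ ^ 2) ^ (-(1 : ℝ) / 2))
      (Iio 1 ×ˢ univ) := by
  intro p hp
  exact (ContinuousAt.rpow_const (f := fun p : ℝ × ℝ => 1 - p.1 * sin p.2 ^ 2) (by fun_prop)
    (Or.inl (one_sub_mul_sin_sq_pos hp.1 p.2).ne')).continuousWithinAt

theorem continuousOn_ellipticK : ContinuousOn ellipticK (Iio 1) :=
  continuousOn_rpow_one_sub_mul_sin_sq.intervalIntegral_of_prod_univ _ _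

theorem continuousOn_ellipticQuotient : ContinuousOn ellipticQuotient (Iio 1) :=
  ContinuousOn.intervalIntegral_of_prod_univ
    ((by fun_prop : Continuous fun p : ℝ × ℝ => (1 + p.1) * sin p.2 ^ 2 - 2).continuousOn.mul
      continuousOn_rpow_one_sub_mul_sin_sq) _ _

theorem ellipticK_zero : ellipticK 0 = π / 2 := by
  simp [ellipticK]

theorem ellipticQuotient_zero : ellipticQuotient 0 = -(3 * π / 4) := by
  simp only [ellipticQuotient, zero_mul, sub_zero, one_rpow, mul_one, add_zero, one_mul]
  rw [integral_sub (by apply Continuous.intervalIntegrable; fun_prop) intervalIntegrable_const,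
    integral_sin_sq]
  simp only [sin_zero, cos_pi_div_two, integral_const, smul_eq_mul]
  ring

theorem sub_mul_ellipticK_sub_mul_ellipticE {m : ℝ} (hm : m < 1) :
    (1 - m) * ellipticK m - (1 + m) * ellipticE m = m * ellipticQuotient m := by
  have hx := one_sub_mul_sin_sq_pos hm
  have hK : Continuous fun θ => (1 - m * sin θ ^ 2) ^ (-(1 : ℝ) / 2) :=
    (by fun_prop : Continuous fun θ => 1 - m * sin θ ^ 2).rpow_const fun θ => Or.inl (hx θ).ne'
  simp only [ellipticK, ellipticE, ellipticQuotient, ← integral_const_mul]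
  rw [← integral_sub (by apply Continuous.intervalIntegrable; fun_prop)
    (by apply Continuous.intervalIntegrable; fun_prop)]
  refine integral_congr fun θ _ => ?_
  have hsqrt : (1 - m * sin θ ^ 2) ^ (-(1 : ℝ) / 2) = (√(1 - m * sin θ ^ 2))⁻¹ := by
    rw [neg_div, rpow_neg (hx θ).le, sqrt_eq_rpow]
  have hsq := sq_sqrt (hx θ).le
  have hne := (sqrt_pos.2 (hx θ)).ne'
  simp only [hsqrt]
  field_simp
  linear_combination -(1 + m) * hsq

theorem sqrt_mul_sqrt_div_mul_abs_mul {m : ℝ} (hm : 0 < m) (a b c : ℝ) :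
    √m * √(a / (b * |m * c|)) = √(a / (b * |c|)) := by
  rw [← sqrt_mul hm.le, abs_mul, abs_of_pos hm, mul_left_comm b, ← mul_div_assoc,
    mul_div_mul_left _ _ hm.ne']

/-- The uncorrected instanton-side Kramers prefactor for Neumann boundary
conditions diverges like `m^{−1/2}` at the bifurcation: with `L(m) = 2√(1+m)·K(m)` and
`μ₀(m) = 1 − (2/(m+1))√(m² − m + 1)`, one has
`lim_{m → 0⁺} √m · (1/π)·|μ₀(m)|·√( sinh(√2·L(m)) / (√2·|(1−m)K(m) − (1+m)E(m)|) )
  = (2/π)·√( sinh(√2 π)/(3√2 π) )`. -/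
theorem stmt_18 :
    Tendsto (fun m : ℝ =>
        Real.sqrt m * ((1 / π) *
          |1 - (2 / (m + 1)) * Real.sqrt (m ^ 2 - m + 1)| *
          Real.sqrt (Real.sinh (Real.sqrt 2 * (2 * Real.sqrt (1 + m) * ellipticK m)) /
            (Real.sqrt 2 * |(1 - m) * ellipticK m - (1 + m) * ellipticE m|))))
      (nhdsWithin 0 (Ioi 0))
      (nhds ((2 / π) *
        Real.sqrt (Real.sinh (Real.sqrt 2 * π) / (3 * Real.sqrt 2 * π)))) := by
  set φ : ℝ → ℝ := fun m => (1 / π) * |1 - (2 / (m + 1)) * √(m ^ 2 - m + 1)| *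
    √(sinh (√2 * (2 * √(1 + m) * ellipticK m)) / (√2 * |ellipticQuotient m|))
  have hK := continuousOn_ellipticK.continuousAt (Iio_mem_nhds one_pos)
  have hQ := continuousOn_ellipticQuotient.continuousAt (Iio_mem_nhds one_pos)
  have hQ0 : √2 * |ellipticQuotient 0| ≠ 0 := by
    simp [ellipticQuotient_zero, pi_ne_zero]
  have h_cont : ContinuousAt φ 0 := by
    fun_prop (disch := first | exact hQ0 | norm_num)
  have h_val : φ 0 = 2 / π * √(sinh (√2 * π) / (3 * √2 * π)) := by
    have hratio :
        sinh (√2 * π) / (√2 * (3 * π / 4)) = 2 ^ 2 * (sinh (√2 * π) / (3 * √2 * π)) := by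
      field_simp
      ring
    have hμ : |1 - 2 / (0 + 1) * √((0 : ℝ) ^ 2 - 0 + 1)| = 1 := by norm_num
    have hL : √2 * (2 * √(1 + 0) * (π / 2)) = √2 * π := by simp only [add_zero, sqrt_one]; ring
    simp only [φ]
    rw [ellipticK_zero, ellipticQuotient_zero, hμ, hL, abs_neg, abs_of_pos (by positivity),
      hratio, sqrt_mul (sq_nonneg 2), sqrt_sq zero_le_two]
    ring
  rw [← h_val]
  refine (h_cont.tendsto.mono_left nhdsWithin_le_nhds).congr' ?_
  filter_upwards [Ioo_mem_nhdsGT one_pos] with m ⟨hm0, hm1⟩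
  rw [sub_mul_ellipticK_sub_mul_ellipticE hm1, mul_left_comm, sqrt_mul_sqrt_div_mul_abs_mul hm0]
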